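/- Let G be a group, fix g₁, …, g_n ∈ G, and for a tuple (v₁, …, v_n, A₁, B₁, …, A_g, B_g) ∈ G^(n+2g) set u_i = v_i g_i v_i⁻¹ and K_j = B_j A_j⁻¹ B_j⁻¹ A_j. Fix index sets {i₁ < … < i_r} ⊆ {1,…,n} and {j₁ < … < j_s} ⊆ {1,…,g}, and set u_γ = K_{j_s} ⋯ K_{j_1} · u_{i_r} ⋯ u_{i_1}. For g ∈ G define ρ(g) : v_{i_l} ↦ g v_{i_l} for l = 1,…,r; A_{j_l} ↦ g A_{j_l} g⁻¹ and B_{j_l} ↦ g B_{j_l} g⁻¹ for l = 1,…,s; v_i ↦ [g, u_{i_l} ⋯ u_{i_1}] v_i for each i with i_l < i < i_{l+1} (l = 0,…,r, with empty product for l = 0 and i_{r+1} = n+1); and A_j ↦ c_l A_j c_l⁻¹, B_j ↦ c_l B_j c_l⁻¹ with c_l = [g, K_{j_l} ⋯ K_{j_1} u_{i_r} ⋯ u_{i_1}] for each j with j_l < j < j_{l+1} (l = 0,…,s, with K-product empty for l = 0 and j_{s+1} = g+1), where all words are computed from the argument tuple and [x,y] = x y x⁻¹ y⁻¹. Then ρ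 is a left action of G on G^(n+2g), and u_γ is conjugation-equivariant: u_γ evaluated on ρ(g) of a tuple equals g · u_γ · g⁻¹ evaluated on that tuple. -/

import Mathlib

/-- The group commutator `[x,y] = x y x⁻¹ y⁻¹`. -/
def gcomm {G : Type*} [Group G] (x y : G) : G := x * y * x⁻¹ * y⁻¹

/-- The puncture holonomy component `u_i = v_i g_i v_i⁻¹`. -/
def puncU {G : Type*} [Group G] {n : ℕ} (gg : Fin n → G) (v : Fin n → G) (i : Fin n) : G :=
  v i * gg i * (v i)⁻¹

/-- The handle word `K_j = B_j A_j⁻¹ B_j⁻¹ A_j`. -/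
def handleK {G : Type*} [Group G] {m : ℕ} (A B : Fin m → G) (j : Fin m) : G :=
  B j * (A j)⁻¹ * (B j)⁻¹ * A j

/-- The ordered (decreasing-index) product `f(l-1) ⋯ f(1) f(0)` of the first `l`
values of `f`. -/
def prefixProd {G : Type*} [Group G] {r : ℕ} (f : Fin r → G) (l : ℕ) : G :=
  ((List.ofFn fun t : Fin r => if (t : ℕ) < l then f t else 1).reverse).prod

/-!
Under `ρ(g)` every marked coordinate moves so that the corresponding `u_{i_l}` or `K_{j_l}`
is conjugated by `g`; hence every partial word in them, `u_γ` in particular, is conjugated by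
`g`. The unmarked coordinates are twisted by commutators `[g, P]` with such a word `P`, and the
action law for them is the cocycle identity `[g₁ g₂, P] = [g₁, g₂ P g₂⁻¹] [g₂, P]`.
-/

section Commutator

variable {G : Type*} [Group G]

lemma gcomm_one_left (P : G) : gcomm 1 P = 1 := by
  simp [gcomm]

lemma gcomm_mul_left (g₁ g₂ P : G) :
    gcomm (g₁ * g₂) P = gcomm g₁ (g₂ * P * g₂⁻¹) * gcomm g₂ P := by
  simp only [gcomm]; group

end Commutator

section PrefixProd

variable {G H : Type*} [Group G] [Group H] {r : ℕ}

lemma map_prefixProd (φ : G →* H) (f : Fin r → G) (l : ℕ) :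
    prefixProd (φ ∘ f) l = φ (prefixProd f l) := by
  have hterm : (fun t : Fin r => if (t : ℕ) < l then (φ ∘ f) t else 1) =
      φ ∘ fun t : Fin r => if (t : ℕ) < l then f t else 1 := by
    funext t
    by_cases ht : (t : ℕ) < l <;> simp [ht]
  rw [prefixProd, prefixProd, hterm, ← List.map_ofFn, ← List.map_reverse, map_list_prod]

lemma prefixProd_conj (c : G) (f : Fin r → G) (l : ℕ) :
    prefixProd (fun t => c * f t * c⁻¹) l = c * prefixProd f l * c⁻¹ :=
  map_prefixProd (MulAut.conj c).toMonoidHom f l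

end PrefixProd

section Holonomy

variable {G : Type*} [Group G] {n m r s : ℕ}

abbrev HolonomyTuple (G : Type*) (n m : ℕ) : Type _ :=
  (Fin n → G) × (Fin m → G) × (Fin m → G)

lemma puncU_of_eq_mul {gg v v' : Fin n → G} {g : G} {i : Fin n} (h : v' i = g * v i) :
    puncU gg v' i = g * puncU gg v i * g⁻¹ := by
  simp only [puncU, h]; group

lemma handleK_of_eq_conj {A B A' B' : Fin m → G} {g : G} {j : Fin m}
    (hA : A' j = g * A j * g⁻¹) (hB : B' j = g * B j * g⁻¹) :
    handleK A' B' j = g * handleK A B j * g⁻¹ := by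
  simp only [handleK, hA, hB]; group

def numBefore {k : ℕ} (e : Fin k → Fin n) (i : Fin n) : ℕ :=
  (Finset.univ.filter fun t : Fin k => e t < i).card

variable (gg : Fin n → G) (ι : Fin r → Fin n) (κ : Fin s → Fin m)

def puncWord (v : Fin n → G) (l : ℕ) : G :=
  prefixProd (fun t => puncU gg v (ι t)) l

def handleWord (A B : Fin m → G) (l : ℕ) : G :=
  prefixProd (fun t => handleK A B (κ t)) l

def curveHolonomy (q : HolonomyTuple G n m) : G :=
  handleWord κ q.2.1 q.2.2 s * puncWord gg ι q.1 r

/-- For `j_l < j < j_{l+1}` we have `numBefore κ j = l`, so this is the paper's `c_l`. -/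
def handleTwist (g : G) (q : HolonomyTuple G n m) (j : Fin m) : G :=
  gcomm g (handleWord κ q.2.1 q.2.2 (numBefore κ j) * puncWord gg ι q.1 r)

def separatingAction (g : G) (q : HolonomyTuple G n m) : HolonomyTuple G n m :=
  (fun i => if ∃ t, ι t = i then g * q.1 i
      else gcomm g (puncWord gg ι q.1 (numBefore ι i)) * q.1 i,
   fun j => if ∃ t, κ t = j then g * q.2.1 j * g⁻¹
      else handleTwist gg ι κ g q j * q.2.1 j * (handleTwist gg ι κ g q j)⁻¹,
   fun j => if ∃ t, κ t = j then g * q.2.2 j * g⁻¹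
      else handleTwist gg ι κ g q j * q.2.2 j * (handleTwist gg ι κ g q j)⁻¹)

variable {gg ι κ}

lemma puncWord_separatingAction (g : G) (q : HolonomyTuple G n m) (l : ℕ) :
    puncWord gg ι (separatingAction gg ι κ g q).1 l = g * puncWord gg ι q.1 l * g⁻¹ := by
  rw [puncWord, puncWord, ← prefixProd_conj]
  congr 1
  funext t
  exact puncU_of_eq_mul (if_pos ⟨t, rfl⟩)

lemma handleWord_separatingAction (g : G) (q : HolonomyTuple G n m) (l : ℕ) :
    handleWord κ (separatingAction gg ι κ g q).2.1 (separatingAction gg ι κ g q).2.2 l =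
      g * handleWord κ q.2.1 q.2.2 l * g⁻¹ := by
  rw [handleWord, handleWord, ← prefixProd_conj]
  congr 1
  funext t
  exact handleK_of_eq_conj (if_pos ⟨t, rfl⟩) (if_pos ⟨t, rfl⟩)

lemma handleTwist_separatingAction (g₁ g₂ : G) (q : HolonomyTuple G n m) (j : Fin m) :
    handleTwist gg ι κ g₁ (separatingAction gg ι κ g₂ q) j * handleTwist gg ι κ g₂ q j =
      handleTwist gg ι κ (g₁ * g₂) q j := by
  rw [handleTwist, handleTwist, handleTwist, handleWord_separatingAction,
    puncWord_separatingAction, gcomm_mul_left]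
  congr 2
  group

theorem curveHolonomy_separatingAction (g : G) (q : HolonomyTuple G n m) :
    curveHolonomy gg ι κ (separatingAction gg ι κ g q) =
      g * curveHolonomy gg ι κ q * g⁻¹ := by
  rw [curveHolonomy, curveHolonomy, handleWord_separatingAction, puncWord_separatingAction]
  group

theorem separatingAction_one (q : HolonomyTuple G n m) :
    separatingAction gg ι κ 1 q = q := by
  refine Prod.ext (funext fun i => ?_) (Prod.ext (funext fun j => ?_) (funext fun j => ?_)) <;>
    simp [separatingAction, handleTwist, gcomm_one_left]

theorem separatingAction_mul (g₁ g₂ : G) (q : HolonomyTuple G n m) :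
    separatingAction gg ι κ (g₁ * g₂) q =
      separatingAction gg ι κ g₁ (separatingAction gg ι κ g₂ q) := by
  refine Prod.ext (funext fun i => ?_) (Prod.ext (funext fun j => ?_) (funext fun j => ?_))
  · by_cases h : ∃ t, ι t = i
    · simp only [separatingAction, if_pos h, mul_assoc]
    · have hword :=
        puncWord_separatingAction (gg := gg) (ι := ι) (κ := κ) g₂ q (numBefore ι i)
      simp only [separatingAction, if_neg h] at hword ⊢
      rw [hword, gcomm_mul_left, mul_assoc]
  all_goals
    by_cases h : ∃ t, κ t = j
    · simp only [separatingAction, if_pos h]; group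
    · have htwist := handleTwist_separatingAction (gg := gg) (ι := ι) (κ := κ) g₁ g₂ q j
      simp only [separatingAction, if_neg h] at htwist ⊢
      rw [← htwist]
      group

end Holonomy

theorem lifted_action_for_separating_curve_general {G : Type*} [Group G] {n m r s : ℕ}
    (gg : Fin n → G)
    (ι : Fin r → Fin n)
    (κ : Fin s → Fin m)
    (uγ : ((Fin n → G) × (Fin m → G) × (Fin m → G)) → G)
    (huγ : ∀ (v : Fin n → G) (A B : Fin m → G),
      uγ (v, A, B) =
        prefixProd (fun t => handleK A B (κ t)) s *
        prefixProd (fun t => puncU gg v (ι t)) r)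
    (ρ : G → ((Fin n → G) × (Fin m → G) × (Fin m → G)) →
          ((Fin n → G) × (Fin m → G) × (Fin m → G)))
    (hρ : ∀ (g : G) (v : Fin n → G) (A B : Fin m → G),
      ρ g (v, A, B) =
        (fun i =>
          if ∃ t, ι t = i then g * v i
          else
            gcomm g (prefixProd (fun t => puncU gg v (ι t))
              ((Finset.univ.filter fun t : Fin r => ι t < i).card)) * v i,
         fun j =>
          if ∃ t, κ t = j then g * A j * g⁻¹
          else
            gcomm g (prefixProd (fun t => handleK A B (κ t))
                  ((Finset.univ.filter fun t : Fin s => κ t < j).card) *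
                prefixProd (fun t => puncU gg v (ι t)) r) * A j *
              (gcomm g (prefixProd (fun t => handleK A B (κ t))
                  ((Finset.univ.filter fun t : Fin s => κ t < j).card) *
                prefixProd (fun t => puncU gg v (ι t)) r))⁻¹,
         fun j =>
          if ∃ t, κ t = j then g * B j * g⁻¹
          else
            gcomm g (prefixProd (fun t => handleK A B (κ t))
                  ((Finset.univ.filter fun t : Fin s => κ t < j).card) *
                prefixProd (fun t => puncU gg v (ι t)) r) * B j *
              (gcomm g (prefixProd (fun t => handleK A B (κ t))
                  ((Finset.univ.filter fun t : Fin s => κ t < j).card) *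
                prefixProd (fun t => puncU gg v (ι t)) r))⁻¹)) :
    (∀ q, ρ 1 q = q) ∧ (∀ g₁ g₂ q, ρ (g₁ * g₂) q = ρ g₁ (ρ g₂ q)) ∧
    (∀ (g : G) (q : (Fin n → G) × (Fin m → G) × (Fin m → G)),
      uγ (ρ g q) = g * uγ q * g⁻¹) := by
  have hρ' : ρ = separatingAction gg ι κ :=
    funext fun g => funext fun ⟨v, A, B⟩ => hρ g v A B
  have huγ' : uγ = curveHolonomy gg ι κ := funext fun ⟨v, A, B⟩ => huγ v A B
  subst hρ' huγ'
  exact ⟨separatingAction_one, separatingAction_mul, curveHolonomy_separatingAction⟩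

/-- The lifted `G`-action associated to the separating curve
`γ^{i₁…i_r j₁…j_s} = [b_{j_s}, a_{j_s}⁻¹] ⋯ [b_{j_1}, a_{j_1}⁻¹] · m_{i_r} ⋯ m_{i_1}`,
with holonomy component `u_γ = K_{j_s} ⋯ K_{j_1} · u_{i_r} ⋯ u_{i_1}`, is a left
action of `G` on `G^(n+2g)`, and `u_γ` is conjugation-equivariant. -/
theorem lifted_action_for_separating_curve {G : Type*} [Group G] {n m r s : ℕ}
    (gg : Fin n → G)
    (ι : Fin r → Fin n) (hι : StrictMono ι)
    (κ : Fin s → Fin m) (hκ : StrictMono κ)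
    (uγ : ((Fin n → G) × (Fin m → G) × (Fin m → G)) → G)
    (huγ : ∀ (v : Fin n → G) (A B : Fin m → G),
      uγ (v, A, B) =
        prefixProd (fun t => handleK A B (κ t)) s *
        prefixProd (fun t => puncU gg v (ι t)) r)
    (ρ : G → ((Fin n → G) × (Fin m → G) × (Fin m → G)) →
          ((Fin n → G) × (Fin m → G) × (Fin m → G)))
    (hρ : ∀ (g : G) (v : Fin n → G) (A B : Fin m → G),
      ρ g (v, A, B) =
        (fun i =>
          if ∃ t, ι t = i then g * v i
          else
            gcomm g (prefixProd (fun t => puncU gg v (ι t))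
              ((Finset.univ.filter fun t : Fin r => ι t < i).card)) * v i,
         fun j =>
          if ∃ t, κ t = j then g * A j * g⁻¹
          else
            gcomm g (prefixProd (fun t => handleK A B (κ t))
                  ((Finset.univ.filter fun t : Fin s => κ t < j).card) *
                prefixProd (fun t => puncU gg v (ι t)) r) * A j *
              (gcomm g (prefixProd (fun t => handleK A B (κ t))
                  ((Finset.univ.filter fun t : Fin s => κ t < j).card) *
                prefixProd (fun t => puncU gg v (ι t)) r))⁻¹,
         fun j =>
          if ∃ t, κ t = j then g * B j * g⁻¹
          else
            gcomm g (prefixProd (fun t => handleK A B (κ t))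
                  ((Finset.univ.filter fun t : Fin s => κ t < j).card) *
                prefixProd (fun t => puncU gg v (ι t)) r) * B j *
              (gcomm g (prefixProd (fun t => handleK A B (κ t))
                  ((Finset.univ.filter fun t : Fin s => κ t < j).card) *
                prefixProd (fun t => puncU gg v (ι t)) r))⁻¹)) :
    (∀ q, ρ 1 q = q) ∧ (∀ g₁ g₂ q, ρ (g₁ * g₂) q = ρ g₁ (ρ g₂ q)) ∧
    (∀ (g : G) (q : (Fin n → G) × (Fin m → G) × (Fin m → G)),
      uγ (ρ g q) = g * uγ q * g⁻¹) :=
  lifted_action_for_separating_curve_general gg ι κ uγ huγ ρ hρ
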